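/- arXiv:2002.06746 — 5 statements merged into one kernel-verified Lean document; each statement's English description precedes it below -/
import Mathlib

section
/- For any real numbers p00, p01, p10, p11 ≥ 0 with p00 + p01 + p10 + p11 = 1, setting α = p10 + p11 and β = p01 + p11, the inequality p01 + p10 ≤ 2·(β·(1−α) + α·(1−β)) holds. (Theorem 1: for any joint distribution of two binary potential outcomes, the probability of individual unfairness P(Y₀ ≠ Y₁) is at most twice the value it would have if the outcomes were independent with the same marginals.) -/
theorem piu_upper_bound_twice_independent
    (p00 p01 p10 p11 : ℝ)
    (h00 : 0 ≤ p00) (h01 : 0 ≤ p01) (h10 : 0 ≤ p10) (h11 : 0 ≤ p11)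
    (hsum : p00 + p01 + p10 + p11 = 1) :
    p01 + p10 ≤
      2 * ((p01 + p11) * (1 - (p10 + p11)) + (p10 + p11) * (1 - (p01 + p11))) := by
  nlinarith [mul_nonneg h01 h10, mul_nonneg h00 h11, mul_nonneg h01 h00, mul_nonneg h10 h00, mul_nonneg h01 h11, mul_nonneg h10 h11, sq_nonneg (p01 - p10)]
end

section
/- Let (Ω, μ) be a probability space and let Y₀, Y₁ : Ω → {0,1} be measurable random variables with α = μ(Y₀ = 1) and β = μ(Y₁ = 1). Then μ(Y₀ ≠ Y₁) ≤ 2·(β·(1−α) + α·(1−β)). (Measure-theoretic form of Theorem 1.) -/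
open MeasureTheory
open scoped ENNReal

theorem piu_upper_bound_twice_independent_measure
    {Ω : Type*} [MeasurableSpace Ω] (μ : Measure Ω) [IsProbabilityMeasure μ]
    (Y₀ Y₁ : Ω → Fin 2) (hY₀ : Measurable Y₀) (hY₁ : Measurable Y₁) :
    μ {ω | Y₀ ω ≠ Y₁ ω} ≤
      2 * (μ {ω | Y₁ ω = 1} * (1 - μ {ω | Y₀ ω = 1}) +
           μ {ω | Y₀ ω = 1} * (1 - μ {ω | Y₁ ω = 1})) := by
  set A : Set Ω := {ω | Y₀ ω = 1 ∧ Y₁ ω ≠ 1} with hA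
  set B : Set Ω := {ω | Y₀ ω ≠ 1 ∧ Y₁ ω = 1} with hB
  have hsub : {ω | Y₀ ω ≠ Y₁ ω} ⊆ A ∪ B := by
    intro ω h
    by_cases h0 : Y₀ ω = 1 <;> by_cases h1 : Y₁ ω = 1 <;>
      simp_all [A, B] <;> omega
  have hstep : μ {ω | Y₀ ω ≠ Y₁ ω} ≤ μ A + μ B :=
    (measure_mono hsub).trans (measure_union_le A B)
  -- complements
  have hm0 : MeasurableSet {ω | Y₀ ω = 1} := hY₀ (measurableSet_singleton 1)
  have hm1 : MeasurableSet {ω | Y₁ ω = 1} := hY₁ (measurableSet_singleton 1)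
  have hc0 : μ {ω | Y₀ ω ≠ 1} = 1 - μ {ω | Y₀ ω = 1} := by
    have h : {ω | Y₀ ω ≠ 1} = {ω | Y₀ ω = 1}ᶜ := rfl
    rw [h, measure_compl hm0 (measure_ne_top μ _), measure_univ]
  have hc1 : μ {ω | Y₁ ω ≠ 1} = 1 - μ {ω | Y₁ ω = 1} := by
    have h : {ω | Y₁ ω ≠ 1} = {ω | Y₁ ω = 1}ᶜ := rfl
    rw [h, measure_compl hm1 (measure_ne_top μ _), measure_univ]
  have hA1 : μ A ≤ μ {ω | Y₀ ω = 1} := measure_mono fun ω h => h.1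
  have hA2 : μ A ≤ 1 - μ {ω | Y₁ ω = 1} := hc1 ▸ measure_mono fun ω h => h.2
  have hB1 : μ B ≤ μ {ω | Y₁ ω = 1} := measure_mono fun ω h => h.2
  have hB2 : μ B ≤ 1 - μ {ω | Y₀ ω = 1} := hc0 ▸ measure_mono fun ω h => h.1
  refine hstep.trans ?_
  -- move to real numbers
  set α := μ {ω | Y₀ ω = 1}
  set β := μ {ω | Y₁ ω = 1}
  have hα1 : α ≤ 1 := prob_le_one
  have hβ1 : β ≤ 1 := prob_le_one
  have hαt : α ≠ ⊤ := measure_ne_top μ _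
  have hβt : β ≠ ⊤ := measure_ne_top μ _
  have hAt : μ A ≠ ⊤ := measure_ne_top μ _
  have hBt : μ B ≠ ⊤ := measure_ne_top μ _
  have h1αt : (1 - α) ≠ ⊤ := (tsub_le_self.trans_lt ENNReal.one_lt_top).ne
  have h1βt : (1 - β) ≠ ⊤ := (tsub_le_self.trans_lt ENNReal.one_lt_top).ne
  have hRt : (2 : ℝ≥0∞) * (β * (1 - α) + α * (1 - β)) ≠ ⊤ := by
    finiteness
  rw [← ENNReal.toReal_le_toReal (by finiteness) hRt]
  rw [ENNReal.toReal_add hAt hBt, ENNReal.toReal_mul, ENNReal.toReal_add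
    (by finiteness) (by finiteness), ENNReal.toReal_mul, ENNReal.toReal_mul,
    ENNReal.toReal_sub_of_le hα1 ENNReal.one_ne_top,
    ENNReal.toReal_sub_of_le hβ1 ENNReal.one_ne_top, ENNReal.toReal_one,
    ENNReal.toReal_ofNat]
  have ha0 : (0:ℝ) ≤ α.toReal := ENNReal.toReal_nonneg
  have hb0 : (0:ℝ) ≤ β.toReal := ENNReal.toReal_nonneg
  have ha1 : α.toReal ≤ 1 := by
    simpa using ENNReal.toReal_mono ENNReal.one_ne_top hα1
  have hb1 : β.toReal ≤ 1 := by
    simpa using ENNReal.toReal_mono ENNReal.one_ne_top hβ1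
  have hx1 : (μ A).toReal ≤ α.toReal := ENNReal.toReal_mono hαt hA1
  have hx2 : (μ A).toReal ≤ 1 - β.toReal := by
    have := ENNReal.toReal_mono h1βt hA2
    rwa [ENNReal.toReal_sub_of_le hβ1 ENNReal.one_ne_top, ENNReal.toReal_one] at this
  have hy1 : (μ B).toReal ≤ β.toReal := ENNReal.toReal_mono hβt hB1
  have hy2 : (μ B).toReal ≤ 1 - α.toReal := by
    have := ENNReal.toReal_mono h1αt hB2
    rwa [ENNReal.toReal_sub_of_le hα1 ENNReal.one_ne_top, ENNReal.toReal_one] at this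
  set a := α.toReal
  set b := β.toReal
  set x := (μ A).toReal
  set y := (μ B).toReal
  have hx0 : (0:ℝ) ≤ x := ENNReal.toReal_nonneg
  have hy0 : (0:ℝ) ≤ y := ENNReal.toReal_nonneg
  nlinarith [sq_nonneg (a + b - 1), sq_nonneg (a - b), mul_nonneg ha0 hb0,
    mul_nonneg (sub_nonneg.2 ha1) (sub_nonneg.2 hb1)]
end

section
/- For all real numbers α, β with 0 ≤ α ≤ 1 and 0 ≤ β ≤ 1, the inequality min{β, 1−α} + min{α, 1−β} ≤ 2·β·(1−α) + 2·α·(1−β) holds. (Key algebraic inequality in the proof of Theorem 1: the Fréchet upper bound on PIU is dominated by twice the independent-marginals value.) -/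
theorem frechet_le_twice_independent
    (α β : ℝ) (hα0 : 0 ≤ α) (hα1 : α ≤ 1) (hβ0 : 0 ≤ β) (hβ1 : β ≤ 1) :
    min β (1 - α) + min α (1 - β) ≤ 2 * β * (1 - α) + 2 * α * (1 - β) := by
  rcases le_total β (1 - α) with h1 | h1 <;> rcases le_total α (1 - β) with h2 | h2 <;>
    simp [min_eq_left, min_eq_right, h1, h2] <;>
    nlinarith [sq_nonneg (α - β), sq_nonneg (α + β - 1), mul_nonneg hα0 hβ0,
      mul_nonneg (sub_nonneg.2 hα1) (sub_nonneg.2 hβ1),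
      mul_nonneg (add_nonneg hα0 hβ0) (sub_nonneg.2 hβ1),
      mul_nonneg (add_nonneg hα0 hβ0) (sub_nonneg.2 hα1)]
end

section
/- For any real numbers p00, p01, p10, p11 ≥ 0 with p00 + p01 + p10 + p11 = 1, setting α = p10 + p11 and β = p01 + p11, and for any real numbers l₀, u₀, l₁, u₁ with 0 ≤ l₀ ≤ α ≤ u₀, 0 ≤ l₁ ≤ β ≤ u₁, l₀ ≤ 1, and l₁ ≤ 1, the inequality p01 + p10 ≤ 2·(u₁·(1−l₀) + (1−l₁)·u₀) holds. (For any joint distribution whose marginals lie between the given lower and upper bounds, PIU is at most twice the extended penalty value.) -/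
theorem piu_le_twice_extended_penalty
    (p00 p01 p10 p11 : ℝ)
    (h00 : 0 ≤ p00) (h01 : 0 ≤ p01) (h10 : 0 ≤ p10) (h11 : 0 ≤ p11)
    (hsum : p00 + p01 + p10 + p11 = 1)
    (l₀ u₀ l₁ u₁ : ℝ)
    (hl₀ : 0 ≤ l₀) (hl₀α : l₀ ≤ p10 + p11) (hαu₀ : p10 + p11 ≤ u₀)
    (hl₁ : 0 ≤ l₁) (hl₁β : l₁ ≤ p01 + p11) (hβu₁ : p01 + p11 ≤ u₁)
    (hl₀1 : l₀ ≤ 1) (hl₁1 : l₁ ≤ 1) :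
    p01 + p10 ≤ 2 * (u₁ * (1 - l₀) + (1 - l₁) * u₀) := by
  have h1 : (p01 + p11) * (p00 + p01) ≤ u₁ * (1 - l₀) := by
    apply mul_le_mul hβu₁ (by linarith) (by linarith) (by linarith)
  have h2 : (p10 + p11) * (p00 + p10) ≤ u₀ * (1 - l₁) := by
    apply mul_le_mul hαu₀ (by linarith) (by linarith) (by linarith)
  nlinarith [sq_nonneg (p01 - p10), mul_nonneg h00 h11, mul_nonneg h01 h10]
end

section
/- Let δ be a real number with 0 ≤ δ ≤ 1/4 and let α, β ∈ [0,1] satisfy β·(1−α) + α·(1−β) ≤ δ. Then either both α ≤ 2δ and β ≤ 2δ, or both α ≥ 1−2δ and β ≥ 1−2δ. (As the penalty forces the independent-marginals PIU value toward zero, the pair of marginal probabilities is forced toward (0,0) or (1,1), which is the basis of the individual-level fairness guarantee.) -/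
/-!
The disagreement probability `p = β(1-α) + α(1-β)` is unchanged when both marginals are replaced
by their complements, so it suffices to treat `α ≤ 1/2`. Then `β ≤ 2β(1-α) ≤ 2p`, and `α ≤ 2p`
follows either in the same way (if `β ≤ 1/2`) or from `α ≤ 1/2 < β`.
-/

/-- The probability that two independent `{0,1}`-valued variables with means `α` and `β` differ. -/
def mismatchProb (α β : ℝ) : ℝ := β * (1 - α) + α * (1 - β)

lemma mismatchProb_comm (α β : ℝ) : mismatchProb α β = mismatchProb β α := by
  unfold mismatchProb; ring

lemma mismatchProb_one_sub (α β : ℝ) : mismatchProb (1 - α) (1 - β) = mismatchProb α β := by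
  unfold mismatchProb; ring

section

variable {α β : ℝ}

lemma le_two_mul_mismatchProb_of_le_half (hα0 : 0 ≤ α) (hα : α ≤ 1 / 2) (hβ0 : 0 ≤ β)
    (hβ1 : β ≤ 1) : β ≤ 2 * mismatchProb α β := by
  have key : 2 * mismatchProb α β - β = 2 * α * (1 - β) + β * (1 - 2 * α) := by
    unfold mismatchProb; ring
  have h₁ : 0 ≤ 2 * α * (1 - β) := by have := sub_nonneg.2 hβ1; positivity
  have h₂ : 0 ≤ β * (1 - 2 * α) := mul_nonneg hβ0 (by linarith)
  linarith

lemma both_le_two_mul_mismatchProb (hα0 : 0 ≤ α) (hα : α ≤ 1 / 2)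
    (hβ0 : 0 ≤ β) (hβ1 : β ≤ 1) :
    α ≤ 2 * mismatchProb α β ∧ β ≤ 2 * mismatchProb α β := by
  have hβp := le_two_mul_mismatchProb_of_le_half hα0 hα hβ0 hβ1
  refine ⟨?_, hβp⟩
  rcases le_or_gt β (1 / 2) with hβ | hβ
  · rw [mismatchProb_comm]
    exact le_two_mul_mismatchProb_of_le_half hβ0 hβ hα0 (by linarith)
  · linarith

end

theorem marginals_forced_to_corners_general
    (δ α β : ℝ)
    (hα0 : 0 ≤ α) (hα1 : α ≤ 1) (hβ0 : 0 ≤ β) (hβ1 : β ≤ 1)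
    (hpen : β * (1 - α) + α * (1 - β) ≤ δ) :
    (α ≤ 2 * δ ∧ β ≤ 2 * δ) ∨ (1 - 2 * δ ≤ α ∧ 1 - 2 * δ ≤ β) := by
  change mismatchProb α β ≤ δ at hpen
  rcases le_or_gt α (1 / 2) with hα | hα
  · obtain ⟨hαp, hβp⟩ := both_le_two_mul_mismatchProb hα0 hα hβ0 hβ1
    left
    constructor <;> linarith
  · obtain ⟨hαp, hβp⟩ := both_le_two_mul_mismatchProb (α := 1 - α) (β := 1 - β)
      (by linarith) (by linarith) (by linarith) (by linarith)
    rw [mismatchProb_one_sub] at hαp hβp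
    right
    constructor <;> linarith

theorem marginals_forced_to_corners
    (δ α β : ℝ) (hδ0 : 0 ≤ δ) (hδ : δ ≤ 1 / 4)
    (hα0 : 0 ≤ α) (hα1 : α ≤ 1) (hβ0 : 0 ≤ β) (hβ1 : β ≤ 1)
    (hpen : β * (1 - α) + α * (1 - β) ≤ δ) :
    (α ≤ 2 * δ ∧ β ≤ 2 * δ) ∨ (1 - 2 * δ ≤ α ∧ 1 - 2 * δ ≤ β) :=
  marginals_forced_to_corners_general δ α β hα0 hα1 hβ0 hβ1 hpen
end
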